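/- (Radial Four-Vertex Theorem) Every generic coherent convex polygon P with n ≥ 4 vertices has at least four radially extremal vertices; in fact r_-(P) ≥ 2 and r_+(P) ≥ 2. -/

import Mathlib

open EuclideanGeometry
open scoped Classical

noncomputable section

/-- The Euclidean plane. -/
abbrev Pt := EuclideanSpace ℝ (Fin 2)

/-- Signed area determinant of the triangle `a b c` (positive iff `a b c` is
counterclockwise, i.e. `c` lies strictly to the left of the directed line `a → b`). -/
def det2 (a b c : Pt) : ℝ :=
  (b 0 - a 0) * (c 1 - a 1) - (b 1 - a 1) * (c 0 - a 0)

/-- The vertices `V 0, V 1, …, V (n-1)` (indices mod `n`) are distinct and in convex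
position, listed counterclockwise: every other vertex lies strictly to the left of
each directed edge. -/
def ConvexCCW {n : ℕ} (V : ZMod n → Pt) : Prop :=
  Function.Injective V ∧
    ∀ i j : ZMod n, j ≠ i → j ≠ i + 1 → 0 < det2 (V i) (V (i + 1)) (V j)

/-- The polygon is generic: no three vertices are collinear and no four vertices lie
on a common circle. -/
def GenericPoly {n : ℕ} (V : ZMod n → Pt) : Prop :=
  (∀ i j k : ZMod n, i ≠ j → j ≠ k → i ≠ k →
      ¬ Collinear ℝ ({V i, V j, V k} : Set Pt)) ∧
  (∀ i j k l : ZMod n, i ≠ j → i ≠ k → i ≠ l → j ≠ k → j ≠ l → k ≠ l →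
      ¬ ∃ (O : Pt) (R : ℝ),
        dist (V i) O = R ∧ dist (V j) O = R ∧ dist (V k) O = R ∧ dist (V l) O = R)

/-- `O i` is the center and `R i` the radius of the circle `C i` through
`V (i-1)`, `V i`, `V (i+1)`. -/
def IsCircumData {n : ℕ} (V O : ZMod n → Pt) (R : ZMod n → ℝ) : Prop :=
  ∀ i : ZMod n,
    dist (V (i - 1)) (O i) = R i ∧ dist (V i) (O i) = R i ∧
      dist (V (i + 1)) (O i) = R i

/-- The polygon is coherent: each circumcenter `O i` lies in the closed infinite cone
with apex `V i` spanned by the rays from `V i` through `V (i-1)` and `V (i+1)`. -/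
def Coherent {n : ℕ} (V O : ZMod n → Pt) : Prop :=
  ∀ i : ZMod n, ∃ s t : ℝ, 0 ≤ s ∧ 0 ≤ t ∧
    O i - V i = s • (V (i - 1) - V i) + t • (V (i + 1) - V i)

/-- `V i` is locally maximal-extremal: `V (i-2)` and `V (i+2)` lie strictly outside `C i`. -/
def LocMax {n : ℕ} (V O : ZMod n → Pt) (R : ZMod n → ℝ) (i : ZMod n) : Prop :=
  R i < dist (V (i - 2)) (O i) ∧ R i < dist (V (i + 2)) (O i)

/-- `V i` is locally minimal-extremal: `V (i-2)` and `V (i+2)` lie strictly inside `C i`. -/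
def LocMin {n : ℕ} (V O : ZMod n → Pt) (R : ZMod n → ℝ) (i : ZMod n) : Prop :=
  dist (V (i - 2)) (O i) < R i ∧ dist (V (i + 2)) (O i) < R i

/-- `V i` is globally maximal-extremal: the open disk bounded by `C i` contains no vertex. -/
def GlobMax {n : ℕ} (V O : ZMod n → Pt) (R : ZMod n → ℝ) (i : ZMod n) : Prop :=
  ∀ j : ZMod n, R i ≤ dist (V j) (O i)

/-- `V i` is globally minimal-extremal: the open disk bounded by `C i` contains every
vertex other than `V (i-1)`, `V i`, `V (i+1)`. -/
def GlobMin {n : ℕ} (V O : ZMod n → Pt) (R : ZMod n → ℝ) (i : ZMod n) : Prop :=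
  ∀ j : ZMod n, j ≠ i - 1 → j ≠ i → j ≠ i + 1 → dist (V j) (O i) < R i

/-- `V i` is radially maximal-extremal: `R (i-1) < R i > R (i+1)`. -/
def RadMax {n : ℕ} (R : ZMod n → ℝ) (i : ZMod n) : Prop :=
  R (i - 1) < R i ∧ R (i + 1) < R i

/-- `V i` is radially minimal-extremal: `R (i-1) > R i < R (i+1)`. -/
def RadMin {n : ℕ} (R : ZMod n → ℝ) (i : ZMod n) : Prop :=
  R i < R (i - 1) ∧ R i < R (i + 1)

end

/-!
Coherence places both circumcentres `O i`, `O (i+1)` on the inner side of the edge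
`V i V (i+1)`, where the radius of a circle through the edge grows with the height of its centre.
Comparing heights shows that `R i < R (i+1)` exactly when `V (i+2)` lies outside `C i`, and
symmetrically for `V (i-1)` and `C (i+1)`. So a vertex whose circle leaves `V (i±2)` outside is
radially minimal, and one whose circle encloses them is radially maximal.

There are at least two vertices whose circle `C j` is empty and two whose circle contains all
vertices. Start from a circle through an edge with every vertex on the prescribed side and move
it in the pencil through two vertices until it meets a vertex of the arc between them; recursing
on the shorter arcs ends at a circle through three consecutive vertices, that is, some `C j`.
Genericity makes the separation of `V (j±2)` strict.
-/

lemma dist_sq_eq_coords (X Y : Pt) : dist X Y ^ 2 = (X 0 - Y 0) ^ 2 + (X 1 - Y 1) ^ 2 := by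
  rw [EuclideanSpace.dist_eq, Real.sq_sqrt (by positivity)]
  simp [Fin.sum_univ_two, Real.dist_eq, sq_abs]

lemma det2_rotate (a b c : Pt) : det2 a b c = det2 b c a := by unfold det2; ring

lemma det2_swap (a b c : Pt) : det2 a b c = -det2 b a c := by unfold det2; ring

@[simp] lemma det2_self_left (a b : Pt) : det2 a b a = 0 := by unfold det2; ring

@[simp] lemma det2_self_right (a b : Pt) : det2 a b b = 0 := by unfold det2; ring

lemma det2_eq_of_sub_eq {A B C X Y P : Pt} {s t : ℝ}
    (h : P - C = s • (X - C) + t • (Y - C)) :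
    det2 A B P = det2 A B C + s * (det2 A B X - det2 A B C) + t * (det2 A B Y - det2 A B C) := by
  have h0 := congrArg (· 0) h
  have h1 := congrArg (· 1) h
  simp only [PiLp.sub_apply, PiLp.add_apply, PiLp.smul_apply, smul_eq_mul] at h0 h1
  unfold det2
  linear_combination (B 0 - A 0) * h1 - (B 1 - A 1) * h0

lemma det2_pos_trans {A E X Y Z : Pt} (hX : 0 < det2 A E X) (hY : 0 < det2 A E Y)
    (hZ : 0 < det2 A E Z) (hXZ : 0 < det2 A X Z) (hZY : 0 < det2 A Z Y) :
    0 < det2 A X Y := by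
  have plucker : det2 A X Y * det2 A E Z = det2 A X Z * det2 A E Y + det2 A E X * det2 A Z Y := by
    unfold det2; ring
  have : 0 < det2 A X Y * det2 A E Z := by rw [plucker]; positivity
  exact pos_of_mul_pos_left this hZ.le

section Chord

variable {A B P Q W : Pt} {r r' : ℝ}

lemma dist_sq_mul_sq_radius (hAP : dist A P = r) (hBP : dist B P = r) :
    dist A B ^ 2 * r ^ 2 = (dist A B ^ 2) ^ 2 / 4 + det2 A B P ^ 2 := by
  have hA := congrArg (· ^ 2) hAP
  have hB := congrArg (· ^ 2) hBP
  simp only [dist_sq_eq_coords] at hA hB ⊢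
  unfold det2
  set M0 := (A 0 + B 0) / 2
  set M1 := (A 1 + B 1) / 2
  set E := (A 0 - B 0) ^ 2 + (A 1 - B 1) ^ 2
  linear_combination
    (((B 0 - A 0) * (P 0 - M0) + (B 1 - A 1) * (P 1 - M1)) / 2 - E / 2) * hA
      + (-((B 0 - A 0) * (P 0 - M0) + (B 1 - A 1) * (P 1 - M1)) / 2 - E / 2) * hB

lemma dist_sq_mul_power (hAP : dist A P = r) (hBP : dist B P = r) (hAQ : dist A Q = r')
    (hBQ : dist B Q = r') (hWQ : dist W Q = r') :
    dist A B ^ 2 * (dist W P ^ 2 - r ^ 2) = 2 * (det2 A B Q - det2 A B P) * det2 A B W := by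
  have hA := congrArg (· ^ 2) hAP
  have hB := congrArg (· ^ 2) hBP
  have hA' := congrArg (· ^ 2) hAQ
  have hB' := congrArg (· ^ 2) hBQ
  have hW := congrArg (· ^ 2) hWQ
  simp only [dist_sq_eq_coords] at hA hB hA' hB' hW ⊢
  unfold det2
  set c := (B 0 - A 0) * (W 0 - (A 0 + B 0) / 2) + (B 1 - A 1) * (W 1 - (A 1 + B 1) / 2)
  set E := (A 0 - B 0) ^ 2 + (A 1 - B 1) ^ 2
  linear_combination (-c + E / 2) * hA + (c + E / 2) * hB + (c - E / 2) * hA'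
    + (-c - E / 2) * hB' + E * hW

lemma radius_lt_iff_det2_lt (hAB : A ≠ B) (hAP : dist A P = r) (hBP : dist B P = r)
    (hAQ : dist A Q = r') (hBQ : dist B Q = r') (hP : 0 ≤ det2 A B P) (hQ : 0 ≤ det2 A B Q) :
    r < r' ↔ det2 A B P < det2 A B Q := by
  have hE : 0 < dist A B ^ 2 := pow_pos (dist_pos.mpr hAB) 2
  have hr : 0 ≤ r := hAP ▸ dist_nonneg
  have hr' : 0 ≤ r' := hAQ ▸ dist_nonneg
  have hsq := dist_sq_mul_sq_radius hAP hBP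
  have hsq' := dist_sq_mul_sq_radius hAQ hBQ
  rw [← pow_lt_pow_iff_left₀ hr hr' two_ne_zero, ← pow_lt_pow_iff_left₀ hP hQ two_ne_zero,
    ← mul_lt_mul_iff_right₀ hE]
  constructor <;> intro h <;> linarith

lemma lt_dist_iff_radius_lt (hAP : dist A P = r) (hBP : dist B P = r) (hAQ : dist A Q = r')
    (hBQ : dist B Q = r') (hWQ : dist W Q = r') (hP : 0 ≤ det2 A B P) (hQ : 0 ≤ det2 A B Q)
    (hW : 0 < det2 A B W) :
    r < dist W P ↔ r < r' := by
  have hAB : A ≠ B := by rintro rfl; simp [det2] at hW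
  have hE : 0 < dist A B ^ 2 := pow_pos (dist_pos.mpr hAB) 2
  have hr : 0 ≤ r := hAP ▸ dist_nonneg
  rw [radius_lt_iff_det2_lt hAB hAP hBP hAQ hBQ hP hQ,
    ← pow_lt_pow_iff_left₀ hr dist_nonneg two_ne_zero, ← sub_pos,
    ← mul_pos_iff_of_pos_left hE, dist_sq_mul_power hAP hBP hAQ hBQ hWQ, mul_assoc,
    mul_pos_iff_of_pos_left two_pos,    mul_pos_iff_of_pos_right hW, sub_pos]

lemma dist_lt_iff_radius_lt (hAP : dist A P = r) (hBP : dist B P = r) (hAQ : dist A Q = r')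
    (hBQ : dist B Q = r') (hWQ : dist W Q = r') (hP : 0 ≤ det2 A B P) (hQ : 0 ≤ det2 A B Q)
    (hW : 0 < det2 A B W) :
    dist W P < r ↔ r' < r := by
  have hAB : A ≠ B := by rintro rfl; simp [det2] at hW
  have hE : 0 < dist A B ^ 2 := pow_pos (dist_pos.mpr hAB) 2
  have hr : 0 ≤ r := hAP ▸ dist_nonneg
  have hpow : dist A B ^ 2 * (r ^ 2 - dist W P ^ 2) =
      2 * (det2 A B P - det2 A B Q) * det2 A B W := by
    linear_combination -dist_sq_mul_power hAP hBP hAQ hBQ hWQ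
  rw [radius_lt_iff_det2_lt hAB hAQ hBQ hAP hBP hQ hP,
    ← pow_lt_pow_iff_left₀ dist_nonneg hr two_ne_zero, ← sub_pos,
    ← mul_pos_iff_of_pos_left hE, hpow, mul_assoc, mul_pos_iff_of_pos_left two_pos,
    mul_pos_iff_of_pos_right hW, sub_pos]

end Chord

/-- `F` is the power `X ↦ ‖X‖² - (affine function of X)` with respect to a generalized
circle. Adding an affine function keeps a circle power, so the circles through `A` and `B` form
the pencil `F + t * det2 A B`. -/
def IsCirclePower (F : Pt → ℝ) : Prop :=
  ∃ α β γ : ℝ, ∀ X : Pt, F X = X 0 ^ 2 + X 1 ^ 2 - (α * X 0 + β * X 1 + γ)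

lemma isCirclePower_dist_sq_sub (O : Pt) (r : ℝ) :
    IsCirclePower fun X => dist X O ^ 2 - r ^ 2 :=
  ⟨2 * O 0, 2 * O 1, r ^ 2 - O 0 ^ 2 - O 1 ^ 2, fun X => by
    dsimp only; rw [dist_sq_eq_coords]; ring⟩

lemma IsCirclePower.add_det2 {F : Pt → ℝ} (hF : IsCirclePower F) (t : ℝ) (A B : Pt) :
    IsCirclePower fun X => F X + t * det2 A B X := by
  obtain ⟨α, β, γ, hF⟩ := hF
  exact ⟨α + t * (B 1 - A 1), β - t * (B 0 - A 0), γ + t * (A 1 * B 0 - A 0 * B 1),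
    fun X => by dsimp only; rw [hF]; unfold det2; ring⟩

/-- `F - G` is affine, and by Cramer's rule an affine function vanishing at three
non-collinear points vanishes. -/
lemma IsCirclePower.eq_of_det2_ne_zero {F G : Pt → ℝ} (hF : IsCirclePower F)
    (hG : IsCirclePower G) {P₁ P₂ P₃ : Pt} (h₁ : F P₁ = G P₁) (h₂ : F P₂ = G P₂)
    (h₃ : F P₃ = G P₃) (hdet : det2 P₁ P₂ P₃ ≠ 0) : F = G := by
  obtain ⟨α, β, γ, hF⟩ := hF
  obtain ⟨α', β', γ', hG⟩ := hG
  funext X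
  have cramer : (F X - G X) * det2 P₁ P₂ P₃ = (F P₁ - G P₁) * det2 X P₂ P₃
      + (F P₂ - G P₂) * det2 P₁ X P₃ + (F P₃ - G P₃) * det2 P₁ P₂ X := by
    simp only [hF, hG]; unfold det2; ring
  rw [h₁, h₂, h₃] at cramer
  simp only [sub_self, zero_mul, add_zero] at cramer
  exact sub_eq_zero.mp ((mul_eq_zero.mp cramer).resolve_right hdet)

/-- The circle on diameter `AB`, moved far enough along the pencil towards the points. -/
lemma exists_circlePower_of_det2_pos {ι : Type*} [Finite ι] (P : ι → Pt) {A B : Pt}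
    (hP : ∀ k, P k = A ∨ P k = B ∨ 0 < det2 A B (P k)) {ε : ℝ} (hε : ε ≠ 0) :
    ∃ F, IsCirclePower F ∧ F A = 0 ∧ F B = 0 ∧ ∀ k, 0 ≤ ε * F (P k) := by
  set F₀ : Pt → ℝ := fun X => dist X (midpoint ℝ A B) ^ 2 - (dist A B / 2) ^ 2
  have hF₀A : F₀ A = 0 := by simp [F₀, dist_left_midpoint, div_eq_inv_mul]
  have hF₀B : F₀ B = 0 := by simp [F₀, dist_right_midpoint, div_eq_inv_mul]
  obtain ⟨c, hc⟩ := Finite.bddAbove_range fun k => -(ε * F₀ (P k)) / det2 A B (P k)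
  refine ⟨fun X => F₀ X + c / ε * det2 A B X,
    (isCirclePower_dist_sq_sub _ _).add_det2 _ A B, by simp [hF₀A], by simp [hF₀B],
    fun k => ?_⟩
  have expand : ε * (F₀ (P k) + c / ε * det2 A B (P k)) =
      ε * F₀ (P k) + c * det2 A B (P k) := by
    field_simp
  rcases hP k with h | h | h
  · simp [h, hF₀A]
  · simp [h, hF₀B]
  · have hck := (div_le_iff₀ h).mp (hc ⟨k, rfl⟩)
    rw [expand]
    linarith

/-- Moving in the pencil through `A` and `B` until the circle first meets a point of `s`. -/
lemma exists_circlePower_through_of_det2_pos {ι : Type*} (P : ι → Pt) {s : Finset ι}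
    (hs : s.Nonempty) {A B : Pt} {F : Pt → ℝ} (hF : IsCirclePower F) (hA : F A = 0)
    (hB : F B = 0) {ε : ℝ} (hε : ε ≠ 0) (hside : ∀ k, 0 ≤ ε * F (P k))
    (hin : ∀ k ∈ s, 0 < det2 A B (P k)) (hout : ∀ k ∉ s, det2 A B (P k) ≤ 0) :
    ∃ G, IsCirclePower G ∧ G A = 0 ∧ G B = 0 ∧ (∃ p ∈ s, G (P p) = 0) ∧
      ∀ k, 0 ≤ ε * G (P k) := by
  obtain ⟨p, hp, hmin⟩ := s.exists_min_image (fun k => ε * F (P k) / det2 A B (P k)) hs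
  set μ := ε * F (P p) / det2 A B (P p)
  have hμ : 0 ≤ μ := div_nonneg (hside p) (hin p hp).le
  have expand : ∀ X, ε * (F X + -μ / ε * det2 A B X) = ε * F X - μ * det2 A B X := by
    intro X; field_simp; ring
  refine ⟨fun X => F X + -μ / ε * det2 A B X, hF.add_det2 _ A B, by simp [hA], by simp [hB],
    ⟨p, hp, ?_⟩, fun k => ?_⟩
  · have hzero := expand (P p)
    rw [div_mul_cancel₀ _ (hin p hp).ne', sub_self] at hzero
    exact (mul_eq_zero.mp hzero).resolve_left hε
  · rw [expand]
    by_cases hk : k ∈ s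
    · have := (le_div_iff₀ (hin k hk)).mp (hmin k hk)
      linarith
    · linarith [hside k, mul_nonpos_of_nonneg_of_nonpos hμ (hout k hk)]

section Polygon

variable {n : ℕ} {V O : ZMod n → Pt} {R : ZMod n → ℝ}

lemma ZMod.ne_of_sub_eq_natCast {x y : ZMod n} {k : ℕ} (h : x - y = k) (h0 : 0 < k)
    (hk : k < n) : x ≠ y := by
  intro hxy
  rw [hxy, sub_self, eq_comm, ZMod.natCast_eq_zero_iff] at h
  exact Nat.not_dvd_of_pos_of_lt h0 hk h

lemma ZMod.sub_two_ne (hn : 4 ≤ n) (j : ZMod n) :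
    j - 2 ≠ j - 1 ∧ j - 2 ≠ j ∧ j - 2 ≠ j + 1 :=
  ⟨(ZMod.ne_of_sub_eq_natCast (k := 1) (by ring) one_pos (by omega)).symm,
    (ZMod.ne_of_sub_eq_natCast (k := 2) (by ring) two_pos (by omega)).symm,
    (ZMod.ne_of_sub_eq_natCast (k := 3) (by ring) three_pos (by omega)).symm⟩

lemma ZMod.add_two_ne (hn : 4 ≤ n) (j : ZMod n) :
    j + 2 ≠ j - 1 ∧ j + 2 ≠ j ∧ j + 2 ≠ j + 1 :=
  ⟨ZMod.ne_of_sub_eq_natCast (k := 3) (by ring) three_pos (by omega),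
    ZMod.ne_of_sub_eq_natCast (k := 2) (by ring) two_pos (by omega),
    ZMod.ne_of_sub_eq_natCast (k := 1) (by ring) one_pos (by omega)⟩

lemma ZMod.exists_eq_add_natCast [NeZero n] (a k : ZMod n) : ∃ m < n, k = a + m :=
  ⟨(k - a).val, ZMod.val_lt _, by rw [ZMod.natCast_val, ZMod.cast_id]; ring⟩

lemma ConvexCCW.det2_pos (hconv : ConvexCCW V) (a : ZMod n) {p q : ℕ} (hp : 0 < p)
    (hpq : p < q) (hq : q < n) : 0 < det2 (V a) (V (a + p)) (V (a + q)) := by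
  have left : ∀ {l : ℕ}, 1 < l → l < n → 0 < det2 (V a) (V (a + 1)) (V (a + l)) :=
    fun {l} h1 hl => hconv.2 a _ (ZMod.ne_of_sub_eq_natCast (by ring) (by omega) hl)
      (ZMod.ne_of_sub_eq_natCast (k := l - 1) (by push_cast [Nat.cast_sub h1.le]; ring)
        (by omega) (by omega))
  have edge : ∀ {l : ℕ}, 0 < l → l + 1 < n →
      0 < det2 (V a) (V (a + l)) (V (a + (l + 1 : ℕ))) := fun {l} h0 hl => by
    have h := hconv.2 (a + l) a (ZMod.ne_of_sub_eq_natCast (by ring) h0 (by omega)).symm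
      (ZMod.ne_of_sub_eq_natCast (k := l + 1) (by push_cast; ring) (by omega) hl).symm
    rw [det2_rotate]
    push_cast
    rwa [← add_assoc]
  obtain rfl | hp1 := Nat.one_le_iff_ne_zero.mpr hp.ne' |>.eq_or_lt
  · simpa using left hpq hq
  induction q, hpq using Nat.le_induction with
  | base => exact edge hp hq
  | succ q hpq ih =>
    exact det2_pos_trans (left hp1 (by omega)) (left (by omega) hq) (left (by omega) (by omega))
      (ih (by omega)) (edge (by omega) hq)

lemma ConvexCCW.det2_nonpos_off_arc (hconv : ConvexCCW V) (a : ZMod n) {d m : ℕ}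
    (hd : 0 < d) (hmn : m < n) (hm : m = 0 ∨ d ≤ m) :
    det2 (V (a + d)) (V a) (V (a + m)) ≤ 0 := by
  rcases hm with rfl | hdm
  · simp
  obtain rfl | hdm := hdm.eq_or_lt
  · simp
  rw [det2_swap, neg_nonpos]
  exact (hconv.det2_pos a hd hdm hmn).le

lemma ConvexCCW.det2_pos_succ_succ (hconv : ConvexCCW V) (hn : 3 ≤ n) (i : ZMod n) :
    0 < det2 (V i) (V (i + 1)) (V (i + 2)) :=
  hconv.2 i _ (ZMod.ne_of_sub_eq_natCast (k := 2) (by ring) two_pos hn)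
    (ZMod.ne_of_sub_eq_natCast (k := 1) (by ring) one_pos (by omega))

lemma ConvexCCW.det2_pos_pred (hconv : ConvexCCW V) (hn : 3 ≤ n) (i : ZMod n) :
    0 < det2 (V i) (V (i + 1)) (V (i - 1)) :=
  hconv.2 i _ (ZMod.ne_of_sub_eq_natCast (k := 1) (by ring) one_pos (by omega)).symm
    (ZMod.ne_of_sub_eq_natCast (k := 2) (by ring) two_pos hn).symm

lemma Coherent.det2_center_nonneg (hcoh : Coherent V O) (hconv : ConvexCCW V) (hn : 3 ≤ n)
    (i : ZMod n) :
    0 ≤ det2 (V i) (V (i + 1)) (O i) ∧ 0 ≤ det2 (V i) (V (i + 1)) (O (i + 1)) := by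
  obtain ⟨s, t, hs, -, hO⟩ := hcoh i
  obtain ⟨s', t', -, ht', hO'⟩ := hcoh (i + 1)
  rw [add_sub_cancel_right, add_assoc, one_add_one_eq_two] at hO'
  rw [det2_eq_of_sub_eq hO, det2_eq_of_sub_eq hO']
  simp only [det2_self_left, det2_self_right, sub_zero, zero_add, mul_zero, add_zero]
  exact ⟨mul_nonneg hs (hconv.det2_pos_pred hn i).le,
    mul_nonneg ht' (hconv.det2_pos_succ_succ hn i).le⟩

lemma radius_comparison (hn : 3 ≤ n) (hconv : ConvexCCW V) (hcirc : IsCircumData V O R)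
    (hcoh : Coherent V O) (i : ZMod n) :
    (R i < dist (V (i + 2)) (O i) ↔ R i < R (i + 1)) ∧
    (dist (V (i + 2)) (O i) < R i ↔ R (i + 1) < R i) ∧
    (R (i + 1) < dist (V (i - 1)) (O (i + 1)) ↔ R (i + 1) < R i) ∧
    (dist (V (i - 1)) (O (i + 1)) < R (i + 1) ↔ R i < R (i + 1)) := by
  obtain ⟨hP, hQ⟩ := hcoh.det2_center_nonneg hconv hn i
  obtain ⟨hU, hA, hB⟩ := hcirc i
  obtain ⟨hA', hB', hW⟩ := hcirc (i + 1)
  rw [add_sub_cancel_right] at hA'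
  rw [add_assoc, one_add_one_eq_two] at hW
  have hW₀ := hconv.det2_pos_succ_succ hn i
  have hU₀ := hconv.det2_pos_pred hn i
  exact ⟨lt_dist_iff_radius_lt hA hB hA' hB' hW hP hQ hW₀,
    dist_lt_iff_radius_lt hA hB hA' hB' hW hP hQ hW₀,
    lt_dist_iff_radius_lt hA' hB' hA hB hU hQ hP hU₀,
    dist_lt_iff_radius_lt hA' hB' hA hB hU hQ hP hU₀⟩

lemma locMax_iff_radMin (hn : 3 ≤ n) (hconv : ConvexCCW V) (hcirc : IsCircumData V O R)
    (hcoh : Coherent V O) (i : ZMod n) : LocMax V O R i ↔ RadMin R i := by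
  have hsucc := (radius_comparison hn hconv hcirc hcoh i).1
  have hpred := (radius_comparison hn hconv hcirc hcoh (i - 1)).2.2.1
  rw [sub_add_cancel, sub_sub, one_add_one_eq_two] at hpred
  rw [LocMax, RadMin, hsucc, hpred]

lemma locMin_iff_radMax (hn : 3 ≤ n) (hconv : ConvexCCW V) (hcirc : IsCircumData V O R)
    (hcoh : Coherent V O) (i : ZMod n) : LocMin V O R i ↔ RadMax R i := by
  have hsucc := (radius_comparison hn hconv hcirc hcoh i).2.1
  have hpred := (radius_comparison hn hconv hcirc hcoh (i - 1)).2.2.2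
  rw [sub_add_cancel, sub_sub, one_add_one_eq_two] at hpred
  rw [LocMin, RadMax, hsucc, hpred]

lemma GenericPoly.dist_ne (hgen : GenericPoly V) (hcirc : IsCircumData V O R) (hn : 3 ≤ n)
    {j k : ZMod n} (h₁ : k ≠ j - 1) (h₂ : k ≠ j) (h₃ : k ≠ j + 1) :
    dist (V k) (O j) ≠ R j :=
  fun h => hgen.2 (j - 1) j (j + 1) k
    (ZMod.ne_of_sub_eq_natCast (k := 1) (by ring) one_pos (by omega)).symm
    (ZMod.ne_of_sub_eq_natCast (k := 2) (by ring) two_pos hn).symm h₁.symm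
    (ZMod.ne_of_sub_eq_natCast (k := 1) (by ring) one_pos (by omega)).symm h₂.symm h₃.symm
    ⟨O j, R j, (hcirc j).1, (hcirc j).2.1, (hcirc j).2.2, h⟩

lemma GlobMax.locMax (hgen : GenericPoly V) (hcirc : IsCircumData V O R) (hn : 4 ≤ n)
    {j : ZMod n} (h : GlobMax V O R j) : LocMax V O R j := by
  obtain ⟨hl₁, hl₂, hl₃⟩ := ZMod.sub_two_ne hn j
  obtain ⟨hr₁, hr₂, hr₃⟩ := ZMod.add_two_ne hn j
  exact ⟨(h _).lt_of_ne (hgen.dist_ne hcirc (by omega) hl₁ hl₂ hl₃).symm,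
    (h _).lt_of_ne (hgen.dist_ne hcirc (by omega) hr₁ hr₂ hr₃).symm⟩

lemma GlobMin.locMin (hn : 4 ≤ n) {j : ZMod n} (h : GlobMin V O R j) : LocMin V O R j := by
  obtain ⟨hl₁, hl₂, hl₃⟩ := ZMod.sub_two_ne hn j
  obtain ⟨hr₁, hr₂, hr₃⟩ := ZMod.add_two_ne hn j
  exact ⟨h _ hl₁ hl₂ hl₃, h _ hr₁ hr₂ hr₃⟩

lemma IsCirclePower.eq_circumcircle {G : Pt → ℝ} (hG : IsCirclePower G) (hconv : ConvexCCW V)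
    (hcirc : IsCircumData V O R) (hn : 3 ≤ n) {a : ZMod n} (h₀ : G (V a) = 0)
    (h₁ : G (V (a + 1)) = 0) (h₂ : G (V (a + 2)) = 0) :
    G = fun X => dist X (O (a + 1)) ^ 2 - R (a + 1) ^ 2 := by
  obtain ⟨e₀, e₁, e₂⟩ := hcirc (a + 1)
  rw [add_sub_cancel_right] at e₀
  rw [add_assoc, one_add_one_eq_two] at e₂
  exact hG.eq_of_det2_ne_zero (isCirclePower_dist_sq_sub _ _) (by simp [h₀, e₀])
    (by simp [h₁, e₁]) (by simp [h₂, e₂]) (hconv.det2_pos_succ_succ hn a).ne'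

end Polygon

section Ears

variable {n : ℕ} [NeZero n] {V O : ZMod n → Pt} {R : ZMod n → ℝ} {ε : ℝ}

lemma exists_circumcircle_side_of_arc (hconv : ConvexCCW V) (hcirc : IsCircumData V O R)
    (hε : ε ≠ 0) {d : ℕ} (hd : 2 ≤ d) (hdn : d < n) {a : ZMod n} {F : Pt → ℝ}
    (hF : IsCirclePower F) (ha : F (V a) = 0) (hb : F (V (a + d)) = 0)
    (hside : ∀ k, 0 ≤ ε * F (V k)) :
    ∃ m, 0 < m ∧ m < d ∧ ∀ k, 0 ≤ ε * (dist (V k) (O (a + m)) ^ 2 - R (a + m) ^ 2) := by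
  induction d using Nat.strong_induction_on generalizing a F with
  | _ d ih =>
  set arc := (Finset.Ioo 0 d).image fun m : ℕ => a + m
  have hin : ∀ k ∈ arc, 0 < det2 (V (a + d)) (V a) (V k) := by
    simp only [arc, Finset.mem_image, Finset.mem_Ioo]
    rintro _ ⟨m, ⟨hm0, hmd⟩, rfl⟩
    rw [det2_rotate]
    exact hconv.det2_pos a hm0 hmd hdn
  have hout : ∀ k ∉ arc, det2 (V (a + d)) (V a) (V k) ≤ 0 := by
    intro k hk
    obtain ⟨m, hmn, rfl⟩ := ZMod.exists_eq_add_natCast a k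
    refine hconv.det2_nonpos_off_arc a (by omega) hmn ?_
    by_contra! h
    exact hk (Finset.mem_image_of_mem _ (Finset.mem_Ioo.mpr ⟨Nat.pos_of_ne_zero h.1, h.2⟩))
  have harc : arc.Nonempty := ⟨a + 1, Finset.mem_image.mpr ⟨1, by simp; omega, by simp⟩⟩
  obtain ⟨G, hG, hGb, hGa, ⟨_, hparc, hGp⟩, hGside⟩ :=
    exists_circlePower_through_of_det2_pos V harc hF hb ha hε hside hin hout
  obtain ⟨p, hp, rfl⟩ := Finset.mem_image.mp hparc
  obtain ⟨hp0, hpd⟩ := Finset.mem_Ioo.mp hp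
  by_cases hp2 : 2 ≤ p
  · obtain ⟨m, hm0, hmp, hm⟩ := ih p hpd hp2 (by omega) hG hGa hGp hGside
    exact ⟨m, hm0, by omega, hm⟩
  by_cases hdp : 2 ≤ d - p
  · have hGb' : G (V (a + p + (d - p : ℕ))) = 0 := by
      rwa [add_assoc, ← Nat.cast_add, Nat.add_sub_cancel' hpd.le]
    obtain ⟨m, hm0, hmd, hm⟩ := ih (d - p) (by omega) hdp (by omega) hG hGp hGb' hGside
    refine ⟨p + m, by omega, by omega, ?_⟩
    rwa [Nat.cast_add, ← add_assoc]
  obtain rfl : p = 1 := by omega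
  obtain rfl : d = 2 := by omega
  have hcircle := hG.eq_circumcircle hconv hcirc (by omega) hGa (by simpa using hGp)
    (by simpa using hGb)
  refine ⟨1, one_pos, one_lt_two, fun k => ?_⟩
  simpa [hcircle] using hGside k

lemma exists_circumcircle_side (hn : 3 ≤ n) (hconv : ConvexCCW V) (hcirc : IsCircumData V O R)
    (hε : ε ≠ 0) (a : ZMod n) :
    ∃ j ≠ a, ∀ k, 0 ≤ ε * (dist (V k) (O j) ^ 2 - R j ^ 2) := by
  have hedge : ∀ k, V k = V a ∨ V k = V (a + 1) ∨ 0 < det2 (V a) (V (a + 1)) (V k) := by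
    intro k
    by_cases hka : k = a
    · exact Or.inl (congrArg V hka)
    by_cases hka' : k = a + 1
    · exact Or.inr (Or.inl (congrArg V hka'))
    exact Or.inr (Or.inr (hconv.2 a k hka hka'))
  obtain ⟨F, hF, hFa, hFa', hside⟩ := exists_circlePower_of_det2_pos V hedge hε
  have hwrap : a + 1 + ((n - 1 : ℕ) : ZMod n) = a := by
    push_cast [Nat.cast_sub (by omega : 1 ≤ n), ZMod.natCast_self]; ring
  obtain ⟨m, hm0, hmn, hm⟩ := exists_circumcircle_side_of_arc hconv hcirc hε (d := n - 1)
    (by omega) (by omega) hF hFa' (by rwa [hwrap]) hside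
  exact ⟨a + 1 + m, ZMod.ne_of_sub_eq_natCast (k := m + 1) (by push_cast; ring) (by omega)
    (by omega), hm⟩

lemma exists_pair_circumcircle_side (hn : 3 ≤ n) (hconv : ConvexCCW V)
    (hcirc : IsCircumData V O R) (hε : ε ≠ 0) :
    ∃ j₁ j₂, j₁ ≠ j₂ ∧ (∀ k, 0 ≤ ε * (dist (V k) (O j₁) ^ 2 - R j₁ ^ 2)) ∧
      ∀ k, 0 ≤ ε * (dist (V k) (O j₂) ^ 2 - R j₂ ^ 2) := by
  obtain ⟨j₁, -, h₁⟩ := exists_circumcircle_side hn hconv hcirc hε 0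
  obtain ⟨j₂, hne, h₂⟩ := exists_circumcircle_side hn hconv hcirc hε j₁
  exact ⟨j₁, j₂, hne.symm, h₁, h₂⟩

lemma exists_pair_globMax (hn : 3 ≤ n) (hconv : ConvexCCW V) (hcirc : IsCircumData V O R) :
    ∃ j₁ j₂, j₁ ≠ j₂ ∧ GlobMax V O R j₁ ∧ GlobMax V O R j₂ := by
  obtain ⟨j₁, j₂, hne, h₁, h₂⟩ :=
    exists_pair_circumcircle_side hn hconv hcirc one_ne_zero
  have outside : ∀ {j}, (∀ k, 0 ≤ 1 * (dist (V k) (O j) ^ 2 - R j ^ 2)) → GlobMax V O R j :=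
    fun {j} h k =>
      (pow_le_pow_iff_left₀ ((hcirc j).2.1 ▸ dist_nonneg) dist_nonneg two_ne_zero).mp
        (by linarith [h k])
  exact ⟨j₁, j₂, hne, outside h₁, outside h₂⟩

lemma exists_pair_globMin (hn : 3 ≤ n) (hconv : ConvexCCW V) (hgen : GenericPoly V)
    (hcirc : IsCircumData V O R) :
    ∃ j₁ j₂, j₁ ≠ j₂ ∧ GlobMin V O R j₁ ∧ GlobMin V O R j₂ := by
  obtain ⟨j₁, j₂, hne, h₁, h₂⟩ :=
    exists_pair_circumcircle_side hn hconv hcirc (neg_ne_zero.mpr one_ne_zero)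
  have inside : ∀ {j}, (∀ k, 0 ≤ -1 * (dist (V k) (O j) ^ 2 - R j ^ 2)) → GlobMin V O R j :=
    fun {j} h k hk₁ hk₂ hk₃ =>
      ((pow_le_pow_iff_left₀ dist_nonneg ((hcirc j).2.1 ▸ dist_nonneg) two_ne_zero).mp
        (by linarith [h k])).lt_of_ne (hgen.dist_ne hcirc hn hk₁ hk₂ hk₃)
  exact ⟨j₁, j₂, hne, inside h₁, inside h₂⟩

end Ears

/-- Radial Four-Vertex Theorem: every generic coherent convex polygon with at least four
vertices has at least two radially maximal-extremal and two radially minimal-extremal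
vertices, hence at least four radially extremal vertices. -/
theorem radial_four_vertex
    (n : ℕ) [NeZero n] (hn : 4 ≤ n)
    (V O : ZMod n → Pt) (R : ZMod n → ℝ)
    (hconv : ConvexCCW V) (hgen : GenericPoly V) (hcirc : IsCircumData V O R)
    (hcoh : Coherent V O) :
    2 ≤ {i : ZMod n | RadMax R i}.ncard ∧
    2 ≤ {i : ZMod n | RadMin R i}.ncard ∧
    4 ≤ {i : ZMod n | RadMax R i ∨ RadMin R i}.ncard := by
  have hn3 : 3 ≤ n := by omega
  obtain ⟨a₁, a₂, ha, ha₁, ha₂⟩ := exists_pair_globMin hn3 hconv hgen hcirc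
  obtain ⟨b₁, b₂, hb, hb₁, hb₂⟩ := exists_pair_globMax hn3 hconv hcirc
  have radMax : ∀ {j}, GlobMin V O R j → RadMax R j := fun h =>
    (locMin_iff_radMax hn3 hconv hcirc hcoh _).mp (h.locMin hn)
  have radMin : ∀ {j}, GlobMax V O R j → RadMin R j := fun h =>
    (locMax_iff_radMin hn3 hconv hcirc hcoh _).mp (h.locMax hgen hcirc hn)
  have hmax : 2 ≤ {i | RadMax R i}.ncard :=
    (Set.one_lt_ncard_iff).mpr ⟨a₁, a₂, radMax ha₁, radMax ha₂, ha⟩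
  have hmin : 2 ≤ {i | RadMin R i}.ncard :=
    (Set.one_lt_ncard_iff).mpr ⟨b₁, b₂, radMin hb₁, radMin hb₂, hb⟩
  have hdisj : Disjoint {i | RadMax R i} {i | RadMin R i} :=
    Set.disjoint_left.mpr fun _ hmax hmin => lt_asymm hmax.2 hmin.2
  refine ⟨hmax, hmin, ?_⟩
  rw [Set.ofPred_or, Set.ncard_union_eq hdisj]
  omega
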